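/- Let n ≥ 1, A ∈ ℂ^{n×n}, t ∈ ℝ, and A(t) = cos(t)·H + sin(t)·K where H = (A + A*)/2 and K = (A − A*)/(2i). Suppose y ∈ ℂⁿ is a unit vector with A(t)y = μy, where μ ∈ ℝ is the smallest eigenvalue of the Hermitian matrix A(t). Then Re(e^{−it} z) ≥ Re(e^{−it} · y*Ay) for every z ∈ F(A), and y*Ay ∈ frontier F(A) (the topological frontier of F(A) as a subset of ℂ). -/

import Mathlib

open Matrix

/-- The quadratic form x*Ax = ⟨x, Ax⟩ for A ∈ ℂ^{n×n} and x ∈ ℂⁿ. -/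
noncomputable def qf {n : ℕ} (A : Matrix (Fin n) (Fin n) ℂ) (x : EuclideanSpace ℂ (Fin n)) : ℂ :=
  inner ℂ x (Matrix.toEuclideanLin A x)

/-- The field of values (numerical range) F(A) = { x*Ax : ‖x‖ = 1 }. -/
noncomputable def numericalRange {n : ℕ} (A : Matrix (Fin n) (Fin n) ℂ) : Set ℂ :=
  { z | ∃ x : EuclideanSpace ℂ (Fin n), ‖x‖ = 1 ∧ qf A x = z }

/-- The Hermitian part H = (A + A*)/2. -/
noncomputable def hermPart {n : ℕ} (A : Matrix (Fin n) (Fin n) ℂ) : Matrix (Fin n) (Fin n) ℂ :=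
  (2 : ℂ)⁻¹ • (A + Aᴴ)

/-- The skew part K = (A − A*)/(2i). -/
noncomputable def skewPart {n : ℕ} (A : Matrix (Fin n) (Fin n) ℂ) : Matrix (Fin n) (Fin n) ℂ :=
  (2 * Complex.I)⁻¹ • (A - Aᴴ)

/-- The Hermitian matrix flow A(t) = cos(t)·H + sin(t)·K. -/
noncomputable def matFlow {n : ℕ} (A : Matrix (Fin n) (Fin n) ℂ) (t : ℝ) : Matrix (Fin n) (Fin n) ℂ :=
  (Real.cos t : ℂ) • hermPart A + (Real.sin t : ℂ) • skewPart A


/-!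
Since `H` and `K` are Hermitian, `x*A(t)x = cos t · Re(x*Ax) + sin t · Im(x*Ax) = Re(e^{-it} x*Ax)`.
By the Rayleigh principle this is at least `μ` on unit vectors, with equality at the eigenvector
`y`. Hence `y*Ay` minimises the nonzero real-linear functional `z ↦ Re(e^{-it} z)` on `F(A)`, and
the minimiser of a nonzero linear functional on a set is never an interior point of it.
-/

section IsMinOn

variable {E : Type*} [NormedAddCommGroup E] [NormedSpace ℝ E]

theorem IsMinOn.notMem_interior {f : E →L[ℝ] ℝ} (hf : f ≠ 0) {s : Set E} {p : E}
    (hmin : IsMinOn f s p) : p ∉ interior s := fun hp =>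
  hf ((hmin.isLocalMin (mem_interior_iff_mem_nhds.mp hp)).hasFDerivAt_eq_zero f.hasFDerivAt)

end IsMinOn

theorem mem_frontier_of_isMinOn_re_mul {s : Set ℂ} {c p : ℂ} (hc : c ≠ 0) (hp : p ∈ s)
    (hmin : IsMinOn (fun z => (c * z).re) s p) : p ∈ frontier s := by
  set f : ℂ →L[ℝ] ℝ := Complex.reCLM.comp (ContinuousLinearMap.mul ℝ ℂ c)
  have hf : f ≠ 0 := fun h => by
    simpa [f, hc] using DFunLike.congr_fun h c⁻¹
  exact ⟨subset_closure hp, hmin.notMem_interior hf⟩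

namespace LinearMap.IsSymmetric

variable {𝕜 E : Type*} [RCLike 𝕜] [NormedAddCommGroup E] [InnerProductSpace 𝕜 E]
  [FiniteDimensional 𝕜 E] {T : E →ₗ[𝕜] E}

theorem mul_norm_sq_le_re_inner_of_mem_lowerBounds (hT : T.IsSymmetric) {μ : ℝ}
    (hμ : μ ∈ lowerBounds {r : ℝ | Module.End.HasEigenvalue T (r : 𝕜)}) (x : E) :
    μ * ‖x‖ ^ 2 ≤ RCLike.re (inner 𝕜 (T x) x) := by
  rcases eq_or_ne x 0 with rfl | hx
  · simp
  have : Nontrivial E := ⟨⟨x, 0, hx⟩⟩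
  have hbdd : BddBelow (Set.range fun v : {v : E // v ≠ 0} =>
      RCLike.re (inner 𝕜 (T v) (v : E)) / ‖(v : E)‖ ^ 2) :=
    ⟨-‖LinearMap.toContinuousLinearMap T‖, by
      rintro _ ⟨v, rfl⟩
      exact neg_le_of_abs_le ((LinearMap.toContinuousLinearMap T).rayleighQuotient_le_norm v)⟩
  have hinf := (hμ hT.hasEigenvalue_iInf_of_finiteDimensional).trans (ciInf_le hbdd ⟨x, hx⟩)
  rwa [le_div_iff₀ (by positivity)] at hinf

end LinearMap.IsSymmetric

section QuadraticForm

variable {n : ℕ}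

theorem qf_add (A B : Matrix (Fin n) (Fin n) ℂ) (x : EuclideanSpace ℂ (Fin n)) :
    qf (A + B) x = qf A x + qf B x := by
  simp only [qf, map_add, LinearMap.add_apply, inner_add_right]

theorem qf_smul (c : ℂ) (A : Matrix (Fin n) (Fin n) ℂ) (x : EuclideanSpace ℂ (Fin n)) :
    qf (c • A) x = c * qf A x := by
  simp only [qf, _root_.map_smul, LinearMap.smul_apply, inner_smul_right]

theorem qf_conjTranspose (A : Matrix (Fin n) (Fin n) ℂ) (x : EuclideanSpace ℂ (Fin n)) :
    qf Aᴴ x = starRingEnd ℂ (qf A x) := by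
  rw [qf, Matrix.toEuclideanLin_conjTranspose_eq_adjoint, LinearMap.adjoint_inner_right,
    ← inner_conj_symm, qf]

theorem qf_hermPart (A : Matrix (Fin n) (Fin n) ℂ) (x : EuclideanSpace ℂ (Fin n)) :
    qf (hermPart A) x = (qf A x).re := by
  rw [hermPart, qf_smul, qf_add, qf_conjTranspose, Complex.add_conj]
  push_cast
  ring

theorem qf_skewPart (A : Matrix (Fin n) (Fin n) ℂ) (x : EuclideanSpace ℂ (Fin n)) :
    qf (skewPart A) x = (qf A x).im := by
  rw [skewPart, qf_smul, sub_eq_add_neg, qf_add, ← neg_one_smul ℂ Aᴴ, qf_smul, qf_conjTranspose,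
    neg_one_mul, ← sub_eq_add_neg, Complex.sub_conj]
  push_cast
  field_simp

theorem re_exp_neg_I_mul_mul (t : ℝ) (z : ℂ) :
    (Complex.exp (-(Complex.I * t)) * z).re = Real.cos t * z.re + Real.sin t * z.im := by
  rw [show -(Complex.I * t) = ((-t : ℝ) : ℂ) * Complex.I by push_cast; ring, Complex.exp_mul_I]
  simp [Complex.mul_re, ← Complex.ofReal_cos, ← Complex.ofReal_sin]

theorem qf_matFlow (A : Matrix (Fin n) (Fin n) ℂ) (t : ℝ) (x : EuclideanSpace ℂ (Fin n)) :
    qf (matFlow A t) x = (Complex.exp (-(Complex.I * t)) * qf A x).re := by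
  rw [matFlow, qf_add, qf_smul, qf_smul, qf_hermPart, qf_skewPart, re_exp_neg_I_mul_mul]
  push_cast
  ring

theorem qf_eq_of_eigenvector {A : Matrix (Fin n) (Fin n) ℂ} {μ : ℂ} {x : EuclideanSpace ℂ (Fin n)}
    (hx : ‖x‖ = 1) (hμ : Matrix.toEuclideanLin A x = μ • x) : qf A x = μ := by
  rw [qf, hμ, inner_smul_right, inner_self_eq_norm_sq_to_K, hx]
  simp

theorem Matrix.IsHermitian.le_re_qf {A : Matrix (Fin n) (Fin n) ℂ} (hA : A.IsHermitian) {μ : ℝ}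
    (hμ : μ ∈ lowerBounds {r : ℝ | (r : ℂ) ∈ spectrum ℂ A}) {x : EuclideanSpace ℂ (Fin n)}
    (hx : ‖x‖ = 1) : μ ≤ (qf A x).re := by
  have hμ' : μ ∈ lowerBounds {r : ℝ | Module.End.HasEigenvalue (Matrix.toEuclideanLin A) (r : ℂ)} :=
    fun r hr => hμ <| by
      simpa [Module.End.hasEigenvalue_iff_mem_spectrum, Matrix.spectrum_toLpLin] using hr
  have hrayleigh := LinearMap.IsSymmetric.mul_norm_sq_le_re_inner_of_mem_lowerBounds
    (Matrix.isSymmetric_toEuclideanLin_iff.mpr hA) hμ' x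
  rwa [hx, one_pow, mul_one, ← inner_re_symm] at hrayleigh

theorem hermPart_isHermitian (A : Matrix (Fin n) (Fin n) ℂ) : (hermPart A).IsHermitian := by
  simp [hermPart, Matrix.IsHermitian, add_comm]

theorem skewPart_isHermitian (A : Matrix (Fin n) (Fin n) ℂ) : (skewPart A).IsHermitian := by
  simp [skewPart, Matrix.IsHermitian, ← smul_neg]

theorem matFlow_isHermitian (A : Matrix (Fin n) (Fin n) ℂ) (t : ℝ) : (matFlow A t).IsHermitian :=
  ((hermPart_isHermitian A).smul (Complex.conj_ofReal _)).add
    ((skewPart_isHermitian A).smul (Complex.conj_ofReal _))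

end QuadraticForm

theorem smallest_eigenvector_point_on_boundary_general (n : ℕ)
    (A : Matrix (Fin n) (Fin n) ℂ) (t : ℝ) (mu : ℝ)
    (hmu : IsLeast {r : ℝ | (r : ℂ) ∈ spectrum ℂ (matFlow A t)} mu)
    (y : EuclideanSpace ℂ (Fin n)) (hy : ‖y‖ = 1)
    (heig : Matrix.toEuclideanLin (matFlow A t) y = (mu : ℂ) • y) :
    (∀ z ∈ numericalRange A,
        (Complex.exp (-(Complex.I * t)) * qf A y).re ≤
          (Complex.exp (-(Complex.I * t)) * z).re) ∧
      qf A y ∈ frontier (numericalRange A) := by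
  have hy_min : (Complex.exp (-(Complex.I * t)) * qf A y).re = mu := by
    have hqf := qf_eq_of_eigenvector hy heig
    rw [qf_matFlow] at hqf
    exact_mod_cast hqf
  have hmin : IsMinOn (fun z => (Complex.exp (-(Complex.I * t)) * z).re) (numericalRange A)
      (qf A y) := by
    rintro _ ⟨x, hx, rfl⟩
    have hx_min := (matFlow_isHermitian A t).le_re_qf hmu.2 hx
    rwa [qf_matFlow, Complex.ofReal_re, ← hy_min] at hx_min
  exact ⟨hmin, mem_frontier_of_isMinOn_re_mul (Complex.exp_ne_zero _) ⟨y, hy, rfl⟩ hmin⟩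

/-- if y is a unit eigenvector of A(t) for its smallest eigenvalue μ, then
Re(e^{−it}z) ≥ Re(e^{−it}·y*Ay) for all z ∈ F(A), and y*Ay ∈ frontier F(A). -/
theorem smallest_eigenvector_point_on_boundary (n : ℕ) (hn : 1 ≤ n)
    (A : Matrix (Fin n) (Fin n) ℂ) (t : ℝ) (mu : ℝ)
    (hmu : IsLeast {r : ℝ | (r : ℂ) ∈ spectrum ℂ (matFlow A t)} mu)
    (y : EuclideanSpace ℂ (Fin n)) (hy : ‖y‖ = 1)
    (heig : Matrix.toEuclideanLin (matFlow A t) y = (mu : ℂ) • y) :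
    (∀ z ∈ numericalRange A,
        (Complex.exp (-(Complex.I * t)) * qf A y).re ≤
          (Complex.exp (-(Complex.I * t)) * z).re) ∧
      qf A y ∈ frontier (numericalRange A) :=
  smallest_eigenvector_point_on_boundary_general n A t mu hmu y hy heig
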